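/- arXiv:2312.12061 — 8 statements merged into one kernel-verified Lean document; each statement's English description precedes it below -/
import Mathlib

section
/- Let C be a unital C*-algebra and x ∈ C a self-adjoint invertible element. Then for every ε > 0 there exists δ > 0 such that for every self-adjoint y ∈ C with ‖x − y‖ < δ, y is invertible and ‖1_{≥0}(x) − 1_{≥0}(y)‖ < ε, where 1_{≥0} denotes the indicator function of [0,∞) applied via continuous functional calculus. -/
/-!
Since `x` is invertible, `0 ∉ σ(x)`, and the indicator of `[0, ∞)` is continuous on the open set
`ℝ \ {0}`. Continuous functional calculus is continuous in the element on the self-adjoint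
elements whose spectra lie in a fixed open set on which the function is continuous (upper
hemicontinuity of the spectrum), so `posSpectralProj` is continuous on the self-adjoint invertible
elements, which form a relatively open set because the units are open.
-/

/-- The spectral projection `1_{≥0}(x)` of a self-adjoint element onto `[0, ∞)`,
obtained by applying the indicator function of `[0, ∞)` via the continuous
functional calculus. -/
noncomputable def posSpectralProj {C : Type*} [CStarAlgebra C] (x : C) : C :=
  cfc (fun t : ℝ => if 0 ≤ t then (1 : ℝ) else 0) x

open Filter Topology

theorem continuousOn_cfc_of_isOpen {A : Type*} [CStarAlgebra A] {f : ℝ → ℝ} {U : Set ℝ}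
    (hU : IsOpen U) (hf : ContinuousOn f U) :
    ContinuousOn (cfc f) {a : A | IsSelfAdjoint a ∧ spectrum ℝ a ⊆ U} :=
  continuousOn_id.cfc_of_mem_nhdsSet f
    (hU.mem_nhdsSet.mpr (Set.iUnion₂_subset fun _ ha => ha.2)) (fun _ ha => ha.1) hf

theorem continuousOn_indicator_nonneg :
    ContinuousOn (fun t : ℝ => if 0 ≤ t then (1 : ℝ) else 0) {0}ᶜ :=
  ContinuousOn.if (fun _ ⟨ht0, ht⟩ => absurd (frontier_Ici (a := (0 : ℝ)) ▸ ht) ht0)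
    continuousOn_const continuousOn_const

theorem continuousOn_posSpectralProj {C : Type*} [CStarAlgebra C] :
    ContinuousOn (posSpectralProj (C := C)) {a : C | IsSelfAdjoint a ∧ IsUnit a} := by
  have h := continuousOn_cfc_of_isOpen (A := C) isOpen_compl_singleton
    continuousOn_indicator_nonneg
  simp only [Set.subset_compl_singleton_iff, spectrum.zero_notMem_iff] at h
  exact h

/-- Let `C` be a unital C*-algebra and `x ∈ C` a self-adjoint invertible
element.  For every `ε > 0` there is `δ > 0` such that every self-adjoint `y` with
`‖x − y‖ < δ` is invertible and `‖1_{≥0}(x) − 1_{≥0}(y)‖ < ε`. -/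
theorem stmt0 {C : Type*} [CStarAlgebra C] (x : C)
    (hx : IsSelfAdjoint x) (hxu : IsUnit x) :
    ∀ ε > (0 : ℝ), ∃ δ > (0 : ℝ), ∀ y : C, IsSelfAdjoint y → ‖x - y‖ < δ →
      IsUnit y ∧ ‖posSpectralProj x - posSpectralProj y‖ < ε := by
  intro ε hε
  have hunit : {y : C | IsUnit y} ∈ 𝓝[{y | IsSelfAdjoint y}] x :=
    mem_nhdsWithin_of_mem_nhds (Units.isOpen.mem_nhds hxu)
  have hcont : Tendsto posSpectralProj (𝓝[{y : C | IsSelfAdjoint y}] x)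
      (𝓝 (posSpectralProj x)) := by
    rw [← nhdsWithin_inter_of_mem' hunit]
    exact continuousOn_posSpectralProj x ⟨hx, hxu⟩
  obtain ⟨δ, hδ, hball⟩ := Metric.mem_nhdsWithin_iff.mp
    (inter_mem hunit (hcont (Metric.ball_mem_nhds _ hε)))
  refine ⟨δ, hδ, fun y hy hxy => ?_⟩
  obtain ⟨hyu, hyε⟩ := hball ⟨by rwa [Metric.mem_ball, dist_eq_norm, norm_sub_rev], hy⟩
  exact ⟨hyu, by rwa [Set.mem_preimage, Metric.mem_ball, dist_eq_norm, norm_sub_rev] at hyε⟩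
end

section
/- Let C be a unital C*-algebra and J ⊆ C a closed two-sided ideal. Then every positive invertible element of C/J lifts to a positive invertible element of C. -/
/-!
Lift `a` to a self-adjoint `x` (e.g. `star c * c` for a lift `c` of a square root of `a`). The
spectrum of `a` is compact and positive, so it lies in `[r, ∞)` for some `r > 0`. Then
`cfc (max · r) x` is strictly positive, and since `*`-homomorphisms commute with the continuous
functional calculus it maps to `cfc (max · r) a = a`.
-/

section CStarAlgebra

variable {A : Type*} [CStarAlgebra A]

lemma cfc_max_const_eq_self {a : A} (ha : IsSelfAdjoint a) {r : ℝ}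
    (h : ∀ t ∈ spectrum ℝ a, r ≤ t) : cfc (fun t : ℝ => max t r) a = a := by
  rw [cfc_congr fun t ht => max_eq_left (h t ht), cfc_id' ℝ a]

variable [PartialOrder A] [StarOrderedRing A]

lemma IsStrictlyPositive.exists_pos_le_spectrum {a : A} (ha : IsStrictlyPositive a) :
    ∃ r > (0 : ℝ), ∀ t ∈ spectrum ℝ a, r ≤ t := by
  rcases (spectrum ℝ a).eq_empty_or_nonempty with h | h
  · exact ⟨1, one_pos, by simp [h]⟩
  · obtain ⟨r, hr, hr_min⟩ := (spectrum.isCompact a).exists_isMinOn h continuousOn_id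
    exact ⟨r, ha.spectrum_pos hr, hr_min⟩

lemma isStrictlyPositive_cfc_max_const {a : A} (ha : IsSelfAdjoint a) {r : ℝ} (hr : 0 < r) :
    IsStrictlyPositive (cfc (fun t : ℝ => max t r) a) :=
  (cfc_isStrictlyPositive_iff _ a).mpr fun t _ => hr.trans_le (le_max_right t r)

lemma StarAlgHom.exists_isStrictlyPositive_lift {B : Type*} [CStarAlgebra B] [PartialOrder B]
    [StarOrderedRing B] (φ : A →⋆ₐ[ℂ] B) (hφ : Function.Surjective φ) {a : B}
    (ha : IsStrictlyPositive a) : ∃ x : A, IsStrictlyPositive x ∧ φ x = a := by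
  obtain ⟨b, -, rfl⟩ := CStarAlgebra.isStrictlyPositive_iff_eq_star_mul_self.mp ha
  obtain ⟨c, rfl⟩ := hφ b
  have hφc : φ (star c * c) = star (φ c) * φ c := by rw [map_mul, map_star]
  obtain ⟨r, hr, hr_le⟩ := ha.exists_pos_le_spectrum
  refine ⟨cfc (fun t : ℝ => max t r) (star c * c),
    isStrictlyPositive_cfc_max_const (.star_mul_self c) hr, ?_⟩
  rw [φ.map_cfc _ _ (hφa := hφc ▸ .star_mul_self (φ c)), hφc,
    cfc_max_const_eq_self (.star_mul_self _) hr_le]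

end CStarAlgebra

/-- Every positive invertible element of a quotient `C/J` of a unital
C*-algebra `C` by a closed two-sided ideal `J` lifts to a positive invertible element of `C`.

The quotient is encoded by a surjective unital `*`-homomorphism `φ : C → D` between unital
C*-algebras (`D ≅ C/ker φ`, and kernels of `*`-homomorphisms are exactly the closed two-sided
ideals).  Positivity of `a` is encoded as `a = star b * b` for some `b`, which for C*-algebras
is equivalent to `a ≥ 0`. -/
theorem stmt3 {C D : Type*} [CStarAlgebra C] [CStarAlgebra D]
    (φ : C →⋆ₐ[ℂ] D) (hφ : Function.Surjective φ)
    (a : D) (ha_pos : ∃ b : D, a = star b * b) (ha_inv : IsUnit a) :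
    ∃ A : C, (∃ b : C, A = star b * b) ∧ IsUnit A ∧ φ A = a := by
  let _ := CStarAlgebra.spectralOrder C
  let _ := CStarAlgebra.spectralOrder D
  have _ := CStarAlgebra.spectralOrderedRing C
  have _ := CStarAlgebra.spectralOrderedRing D
  have ha : IsStrictlyPositive a :=
    ha_inv.isStrictlyPositive (CStarAlgebra.nonneg_iff_eq_star_mul_self.mpr ha_pos)
  obtain ⟨A, hA, hφA⟩ := φ.exists_isStrictlyPositive_lift hφ ha
  exact ⟨A, CStarAlgebra.nonneg_iff_eq_star_mul_self.mp hA.nonneg, hA.isUnit, hφA⟩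
end

section
/- Let C be a unital C*-algebra, J ⊆ C a closed two-sided ideal, and a ∈ C/J a self-adjoint invertible element. Then a lifts to a self-adjoint invertible element of C if and only if the projection 1_{≥0}(a) lifts to a projection in C. -/
open scoped CStarAlgebra

lemma continuousOn_ite_nonneg {β : Type*} [TopologicalSpace β] (c d : β) {s : Set ℝ}
    (hs : (0 : ℝ) ∉ s) : ContinuousOn (fun t : ℝ => if 0 ≤ t then c else d) s :=
  ContinuousOn.if (fun t ⟨hts, htf⟩ => absurd hts (by
      rwa [show t = 0 by simpa using (show t ∈ frontier (Set.Ici (0 : ℝ)) from htf)]))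
    continuousOn_const continuousOn_const

lemma spectrum.exists_pos_forall_le_norm {𝕜 A : Type*} [NormedField 𝕜] [NormedRing A]
    [NormedAlgebra 𝕜 A] [CompleteSpace A] {x : A} (hx : IsUnit x) :
    ∃ ε > 0, ∀ t ∈ spectrum 𝕜 x, ε ≤ ‖t‖ := by
  obtain ⟨ε, hε, hball⟩ :=
    Metric.isOpen_iff.mp (spectrum.isClosed (𝕜 := 𝕜) x).isOpen_compl 0 (spectrum.zero_notMem 𝕜 hx)
  exact ⟨ε, hε, fun t ht => not_lt.mp fun h => hball (mem_ball_zero_iff.mpr h) ht⟩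

section Pinching

variable {R : Type*} [Ring R]

def pinching (p x : R) : R := p * x * p + (1 - p) * x * (1 - p)

lemma IsIdempotentElem.commute_pinching {p : R} (hp : IsIdempotentElem p) (x : R) :
    Commute (pinching p x) p := by
  have hright : pinching p x * p = p * x * p := by
    rw [pinching, add_mul, mul_assoc _ (1 - p), hp.one_sub_mul_self, mul_zero, add_zero,
      mul_assoc _ p, hp.eq]
  have hleft : p * pinching p x = p * x * p := by
    rw [pinching, mul_add, ← mul_assoc p ((1 - p) * x), ← mul_assoc p (1 - p) x,
      hp.mul_one_sub_self, zero_mul, zero_mul, add_zero, ← mul_assoc, ← mul_assoc, hp.eq]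
  exact hright.trans hleft.symm

lemma IsIdempotentElem.pinching_eq_self {p x : R} (hp : IsIdempotentElem p) (hpx : Commute p x) :
    pinching p x = x := by
  rw [pinching, hpx.eq, ((Commute.one_left x).sub_left hpx).eq, mul_assoc, mul_assoc, hp.eq,
    hp.one_sub.eq, ← mul_add, add_sub_cancel, mul_one]

lemma IsSelfAdjoint.pinching [StarRing R] {p x : R} (hp : IsSelfAdjoint p) (hx : IsSelfAdjoint x) :
    IsSelfAdjoint (pinching p x) :=
  (hx.conjugate_self hp).add (hx.conjugate_self ((IsSelfAdjoint.one R).sub hp))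

lemma map_pinching {S F : Type*} [Ring S] [FunLike F R S] [RingHomClass F R S] (φ : F) (p x : R) :
    φ (pinching p x) = pinching (φ p) (φ x) := by
  simp only [pinching, map_add, map_mul, map_sub, map_one]

end Pinching

lemma IsIdempotentElem.two_nsmul_sub_one_mul_self {R : Type*} [Ring R] {p : R}
    (hp : IsIdempotentElem p) : (2 • p - 1) * (2 • p - 1) = 1 := by
  rw [two_nsmul]
  simp only [mul_sub, sub_mul, add_mul, mul_add, mul_one, one_mul, hp.eq]
  abel

lemma exists_isSelfAdjoint_lift_commute {A B : Type*} [Ring A] [StarRing A] [Algebra ℂ A]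
    [StarModule ℂ A] [Ring B] [StarRing B] [Algebra ℂ B] [StarModule ℂ B]
    (φ : A →⋆ₐ[ℂ] B) (hφ : Function.Surjective φ) {a : B} (ha : IsSelfAdjoint a) {p : A}
    (hp : IsStarProjection p) (hpa : Commute (φ p) a) :
    ∃ x : A, IsSelfAdjoint x ∧ Commute x p ∧ φ x = a := by
  obtain ⟨b, rfl⟩ := hφ a
  refine ⟨pinching p (realPart b), hp.isSelfAdjoint.pinching (realPart b).2,
    hp.isIdempotentElem.commute_pinching _, ?_⟩
  rw [map_pinching, map_realPart, ha.coe_realPart,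
    (hp.isIdempotentElem.map φ).pinching_eq_self hpa]

section PosSpectralProj

variable {A : Type*} [CStarAlgebra A] {x : A}

lemma IsUnit.isStarProjection_posSpectralProj (hxu : IsUnit x) :
    IsStarProjection (posSpectralProj x) := by
  have hc := continuousOn_ite_nonneg (1 : ℝ) 0 (spectrum.zero_notMem ℝ hxu)
  refine ⟨?_, cfc_predicate _ x⟩
  rw [IsIdempotentElem, posSpectralProj, ← cfc_mul _ _ x hc hc]
  exact cfc_congr fun t _ => by split_ifs <;> simp

lemma StarAlgHom.map_posSpectralProj {B : Type*} [CStarAlgebra B] (φ : A →⋆ₐ[ℂ] B)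
    (hx : IsSelfAdjoint x) (hxu : IsUnit x) : φ (posSpectralProj x) = posSpectralProj (φ x) :=
  φ.map_cfc _ x (continuousOn_ite_nonneg _ _ (spectrum.zero_notMem ℝ hxu)) (map_continuous φ)

lemma commute_posSpectralProj_self (x : A) : Commute (posSpectralProj x) x :=
  (Commute.refl x).cfc_real _

lemma cfc_abs_mul_two_nsmul_posSpectralProj_sub_one (hx : IsSelfAdjoint x) (hxu : IsUnit x) :
    cfc (fun t : ℝ => |t|) x * (2 • posSpectralProj x - 1) = x := by
  have hc := continuousOn_ite_nonneg (1 : ℝ) 0 (spectrum.zero_notMem ℝ hxu)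
  rw [posSpectralProj, ← cfc_smul .., ← cfc_one ℝ x, ← cfc_sub .., ← cfc_mul ..]
  conv_rhs => rw [← cfc_id' ℝ x]
  refine cfc_congr fun t _ => ?_
  split_ifs with h
  · norm_num [abs_of_nonneg h]
  · simp [abs_of_neg (not_le.mp h)]

end PosSpectralProj

lemma exists_isSelfAdjoint_isUnit_lift_of_lift_posSpectralProj {A B : Type*} [CStarAlgebra A]
    [CStarAlgebra B] (φ : A →⋆ₐ[ℂ] B) (hφ : Function.Surjective φ) {a : B}
    (ha : IsSelfAdjoint a) (hau : IsUnit a) {p : A} (hp : IsStarProjection p)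
    (hpa : φ p = posSpectralProj a) : ∃ x : A, IsSelfAdjoint x ∧ IsUnit x ∧ φ x = a := by
  obtain ⟨ε, hε, hgap⟩ := spectrum.exists_pos_forall_le_norm (𝕜 := ℝ) hau
  obtain ⟨m, hm, hmp, hma⟩ := exists_isSelfAdjoint_lift_commute φ hφ ha hp
    (hpa ▸ commute_posSpectralProj_self a)
  set u := 2 • p - 1
  have hu : IsSelfAdjoint u := ((IsSelfAdjoint.all (2 : ℕ)).smul hp.isSelfAdjoint).sub (.one A)
  have huu : u * u = 1 := hp.isIdempotentElem.two_nsmul_sub_one_mul_self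
  have hmu : Commute m u := (hmp.smul_right 2).sub_right (.one_right m)
  set y := cfc (fun t : ℝ => max |t| ε) m
  have hyu : IsUnit y := (isUnit_cfc_iff _ m).mpr fun t _ => (hε.trans_le (le_max_right _ _)).ne'
  have hy : IsSelfAdjoint y := cfc_predicate _ m
  have hφy : φ y = cfc (fun t : ℝ => |t|) a := by
    rw [φ.map_cfc _ m (hφ := map_continuous φ), hma]
    exact cfc_congr fun t ht => max_eq_left (hgap t ht)
  refine ⟨y * u, (hy.commute_iff hu).mp (hmu.cfc_real _), hyu.mul ⟨⟨u, u, huu, huu⟩, rfl⟩,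
    ?_⟩
  rw [map_mul, hφy, map_sub, map_nsmul, map_one, hpa,
    cfc_abs_mul_two_nsmul_posSpectralProj_sub_one ha hau]

/-- The quotient `C/J` is encoded by a surjective unital `*`-homomorphism `φ : C → D`
(`D ≅ C/ker φ`); a projection is a self-adjoint idempotent. -/
theorem stmt4 {C D : Type*} [CStarAlgebra C] [CStarAlgebra D]
    (φ : C →⋆ₐ[ℂ] D) (hφ : Function.Surjective φ)
    (a : D) (ha : IsSelfAdjoint a) (hau : IsUnit a) :
    (∃ A : C, IsSelfAdjoint A ∧ IsUnit A ∧ φ A = a) ↔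
      (∃ P : C, IsSelfAdjoint P ∧ IsIdempotentElem P ∧ φ P = posSpectralProj a) := by
  constructor
  · rintro ⟨x, hx, hxu, rfl⟩
    have hp := hxu.isStarProjection_posSpectralProj
    exact ⟨_, hp.isSelfAdjoint, hp.isIdempotentElem, φ.map_posSpectralProj hx hxu⟩
  · rintro ⟨p, hp, hp2, hpa⟩
    exact exists_isSelfAdjoint_isUnit_lift_of_lift_posSpectralProj φ hφ ha hau ⟨hp2, hp⟩ hpa
end

section
/- Let 0 < ε < 1/2, let C be a unital C*-algebra and J ⊆ C a closed two-sided ideal. If u ∈ C/J is a unitary with ‖u − 1‖ < ε, then there exists a unitary U ∈ C with π(U) = u and ‖U − 1‖ < ε. -/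
/-!
Since `‖u - 1‖ < 2`, the spectrum of `u` avoids `-1`, so `u = exp (i x)` with `x = arg u`
self-adjoint and `‖x‖ ≤ π`. Lift `x` to a self-adjoint `b` with `‖b‖ ≤ ‖x‖` and put
`U = exp (i b)`. As `‖exp (i y) - 1‖ ^ 2 = 2 (1 - cos ‖y‖)` increases with `‖y‖ ∈ [0, π]`,
`‖U - 1‖ ≤ ‖u - 1‖`.
-/

open selfAdjoint Unitary
open scoped CStarAlgebra ComplexStarModule Real

section

variable {C D : Type*} [CStarAlgebra C] [CStarAlgebra D]

lemma selfAdjoint.norm_expUnitary_sub_one_le {x : selfAdjoint C} {y : selfAdjoint D}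
    (hxy : ‖x‖ ≤ ‖y‖) (hy : ‖y‖ ≤ π) :
    ‖(expUnitary x - 1 : C)‖ ≤ ‖(expUnitary y - 1 : D)‖ := by
  rw [← sq_le_sq₀ (norm_nonneg _) (norm_nonneg _), norm_sq_expUnitary_sub_one (hxy.trans hy),
    norm_sq_expUnitary_sub_one hy]
  gcongr
  exact Real.cos_le_cos_of_nonneg_of_le_pi (norm_nonneg _) hy hxy

namespace StarAlgHom

variable (φ : C →⋆ₐ[ℂ] D)

lemma map_expUnitary (x : selfAdjoint C) :
    φ (expUnitary x) = expUnitary ⟨φ x, x.2.map φ⟩ := by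
  simp only [expUnitary_coe]
  rw [← CFC.exp_eq_normedSpace_exp (𝕜 := ℂ), ← CFC.exp_eq_normedSpace_exp (𝕜 := ℂ),
    StarAlgHom.map_cfc φ _ _, map_smul]

/-- Clamping the real part of any preimage of `a` to `[-‖a‖, ‖a‖]` leaves its image unchanged,
because the spectrum of `a` already lies in that interval. -/
lemma exists_isSelfAdjoint_apply_eq_norm_le (hφ : Function.Surjective φ) {a : D}
    (ha : IsSelfAdjoint a) : ∃ b : C, IsSelfAdjoint b ∧ φ b = a ∧ ‖b‖ ≤ ‖a‖ := by
  obtain ⟨c, rfl⟩ := hφ a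
  set r := ‖φ c‖
  have hc : φ (ℜ c : C) = φ c := by rw [map_realPart, ha.coe_realPart]
  refine ⟨cfc (fun t : ℝ ↦ max (-r) (min r t)) (ℜ c : C), cfc_predicate _ _, ?_,
    norm_cfc_le (norm_nonneg _) fun t _ ↦ ?_⟩
  · rw [StarAlgHom.map_cfc φ _ _, hc]
    conv_rhs => rw [← cfc_id' ℝ (φ c)]
    refine cfc_congr fun t ht ↦ ?_
    cases subsingleton_or_nontrivial D
    · simp [spectrum.of_subsingleton] at ht
    obtain ⟨h₁, h₂⟩ := abs_le.mp (spectrum.norm_le_norm_of_mem ht)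
    rw [min_eq_right h₂, max_eq_right h₁]
  · rw [Real.norm_eq_abs, abs_le]
    exact ⟨by simp [r], by simp [r]⟩

lemma exists_mem_unitary_apply_eq_norm_sub_one_le (hφ : Function.Surjective φ) {u : D}
    (hu : u ∈ unitary D) (hu₂ : ‖u - 1‖ < 2) :
    ∃ U ∈ unitary C, φ U = u ∧ ‖U - 1‖ ≤ ‖u - 1‖ := by
  set x := argSelfAdjoint ⟨u, hu⟩
  have hx : (expUnitary x : D) = u := congrArg Subtype.val (expUnitary_argSelfAdjoint hu₂)
  obtain ⟨b, hb, hφb, hbx⟩ := φ.exists_isSelfAdjoint_apply_eq_norm_le hφ x.2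
  refine ⟨expUnitary ⟨b, hb⟩, (expUnitary _).2, ?_, ?_⟩
  · simp_rw [map_expUnitary, hφb, Subtype.coe_eta, hx]
  · rw [← hx]
    exact norm_expUnitary_sub_one_le hbx (norm_argSelfAdjoint_le_pi _)

end StarAlgHom

end

/-- The quotient map `C → C/J` is modelled by a surjective unital `⋆`-homomorphism `φ : C → D`. -/
theorem stmt5_general {C D : Type*} [CStarAlgebra C] [CStarAlgebra D]
    (φ : C →⋆ₐ[ℂ] D) (hφ : Function.Surjective φ)
    (ε : ℝ) (hε : ε < 1 / 2)
    (u : D) (hu : u ∈ unitary D) (hu1 : ‖u - 1‖ < ε) :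
    ∃ U : C, U ∈ unitary C ∧ φ U = u ∧ ‖U - 1‖ < ε := by
  obtain ⟨U, hU, hφU, hU1⟩ :=
    φ.exists_mem_unitary_apply_eq_norm_sub_one_le hφ hu (by linarith)
  exact ⟨U, hU, hφU, hU1.trans_lt hu1⟩

/-- Let `0 < ε < 1/2`, `C` a unital C*-algebra and `J` a closed two-sided
ideal.  Any unitary `u ∈ C/J` with `‖u − 1‖ < ε` lifts to a unitary `U ∈ C` with
`‖U − 1‖ < ε`.

The quotient is encoded by a surjective unital `*`-homomorphism `φ : C → D` between unital
C*-algebras (`D ≅ C/ker φ`). -/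
theorem stmt5 {C D : Type*} [CStarAlgebra C] [CStarAlgebra D]
    (φ : C →⋆ₐ[ℂ] D) (hφ : Function.Surjective φ)
    (ε : ℝ) (hε0 : 0 < ε) (hε : ε < 1 / 2)
    (u : D) (hu : u ∈ unitary D) (hu1 : ‖u - 1‖ < ε) :
    ∃ U : C, U ∈ unitary C ∧ φ U = u ∧ ‖U - 1‖ < ε :=
  stmt5_general φ hφ ε hε u hu hu1
end

section
/- Let C be a unital C*-algebra and J ⊆ C a closed two-sided ideal. Let p ∈ C/J be a projection which is connected to a projection q ∈ C/J by a norm-continuous path of projections in C/J, and suppose q lifts to a projection in C. Then p lifts to a projection in C. -/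
/-!
If a projection `Q` lifts `q` and `‖p - q‖ < 1/2`, lift `p - q` to a self-adjoint `A` with
`‖A‖ < 1/2`. Since `2Q - 1` is unitary, `2(Q + A) - 1` is invertible, so `1/2` is a gap in the
spectrum of the self-adjoint lift `Q + A` of `p`, and the spectral projection of `Q + A` for
`(1/2, ∞)` lifts `p`. Consequently the set of times at which a continuous path of projections
lifts is open and closed in `[0, 1]`.
-/

open scoped ComplexStarModule CStarAlgebra

theorem IsPreconnected.apply_mem_iff_of_dist_lt {α X : Type*} [TopologicalSpace α]
    [PseudoMetricSpace X] {s : Set α} (hs : IsPreconnected s) {f : α → X}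
    (hf : ContinuousOn f s) {S : Set X} {ε : ℝ} (hε : 0 < ε)
    (hS : ∀ x ∈ s, ∀ y ∈ s, dist (f x) (f y) < ε → f x ∈ S → f y ∈ S)
    {a b : α} (ha : a ∈ s) (hb : b ∈ s) : f a ∈ S ↔ f b ∈ S := by
  refine hs.induction₂ (fun x y => f x ∈ S ↔ f y ∈ S) (fun x hx => ?_)
    (fun _ _ _ _ _ _ => Iff.trans) (fun _ _ _ _ => Iff.symm) ha hb
  filter_upwards [self_mem_nhdsWithin, hf x hx (Metric.ball_mem_nhds (f x) hε)] with y hy hxy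
  exact ⟨hS x hx y hy (dist_comm (f y) (f x) ▸ hxy), hS y hy x hx hxy⟩

theorem Unitary.isUnit_add_of_norm_lt_one {E : Type*} [NormedRing E] [StarRing E] [CStarRing E]
    [CompleteSpace E] {u B : E} (hu : u ∈ unitary E) (hB : ‖B‖ < 1) : IsUnit (u + B) := by
  have hfac : u + B = u * (1 - -(star u * B)) := by
    rw [sub_neg_eq_add, mul_add, mul_one, ← mul_assoc, Unitary.mul_star_self_of_mem hu, one_mul]
  rw [hfac]
  refine (Unitary.isUnit_coe (U := ⟨u, hu⟩)).mul (isUnit_one_sub_of_norm_lt_one ?_)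
  rwa [norm_neg, CStarRing.norm_mem_unitary_mul B (Unitary.star_mem hu)]

theorem IsStarProjection.half_notMem_spectrum_add {C : Type*} [CStarAlgebra C] {Q A : C}
    (hQ : IsStarProjection Q) (hA : ‖A‖ < 2⁻¹) : (2⁻¹ : ℝ) ∉ spectrum ℝ (Q + A) := by
  have hscale : Units.mk0 (-2 : ℝ) (by norm_num) • (algebraMap ℝ C 2⁻¹ - (Q + A)) =
      (2 * Q - 1) + (2 : ℝ) • A := by
    rw [Units.smul_mk0, Algebra.algebraMap_eq_smul_one, two_mul]
    module
  rw [spectrum.mem_iff, not_not, ← isUnit_smul_iff (Units.mk0 (-2 : ℝ) (by norm_num)), hscale]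
  refine Unitary.isUnit_add_of_norm_lt_one hQ.two_mul_sub_one_mem_unitary ?_
  rw [norm_smul, Real.norm_two]
  linarith

theorem exists_isSelfAdjoint_lift_norm_le {C D : Type*} [CStarAlgebra C] [CStarAlgebra D]
    (φ : C →⋆ₐ[ℂ] D) (hφ : Function.Surjective φ) {d : D} (hd : IsSelfAdjoint d) :
    ∃ A : C, IsSelfAdjoint A ∧ φ A = d ∧ ‖A‖ ≤ ‖d‖ := by
  obtain ⟨x, rfl⟩ := hφ d
  have hre : φ (ℜ x : C) = φ x := by rw [map_realPart, hd.coe_realPart]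
  -- truncating `ℜ x` at `±‖φ x‖` does not change its image, whose spectrum lies in that range
  let g : ℝ → ℝ := fun t => max (-‖φ x‖) (min ‖φ x‖ t)
  refine ⟨cfc g (ℜ x : C), cfc_predicate g _, ?_, ?_⟩
  · refine (StarAlgHom.map_cfc φ g (ℜ x : C) (by fun_prop) (map_continuous φ) (ℜ x).2
      (hre ▸ hd)).trans ?_
    rw [hre]
    conv_rhs => rw [← cfc_id ℝ (φ x) hd]
    refine cfc_congr fun t ht => ?_
    have : |t| ≤ ‖φ x‖ := by
      simpa [cfc_id ℝ (φ x) hd] using norm_apply_le_norm_cfc id (φ x) ht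
    obtain ⟨hl, hr⟩ := abs_le.mp this
    simp [g, min_eq_right hr, max_eq_right hl]
  · refine norm_cfc_le (norm_nonneg _) fun t _ => ?_
    rw [Real.norm_eq_abs, abs_le]
    exact ⟨le_max_left _ _, max_le (by simp) (min_le_left _ _)⟩

theorem isStarProjection_cfc {A : Type*} [CStarAlgebra A] {a : A} {g : ℝ → ℝ}
    (hg : Set.MapsTo g (spectrum ℝ a) {0, 1}) (hgc : ContinuousOn g (spectrum ℝ a))
    (ha : IsSelfAdjoint a) : IsStarProjection (cfc g a) := by
  rw [isStarProjection_iff_spectrum_subset_and_isSelfAdjoint, cfc_map_spectrum g a]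
  exact ⟨hg.image_subset, cfc_predicate g a⟩

theorem IsStarProjection.cfc_eq_self {A : Type*} [CStarAlgebra A] {p : A}
    (hp : IsStarProjection p) {g : ℝ → ℝ} (h0 : g 0 = 0) (h1 : g 1 = 1) : cfc g p = p := by
  conv_rhs => rw [← cfc_id ℝ p hp.isSelfAdjoint]
  refine cfc_congr fun t ht => ?_
  rcases hp.isIdempotentElem.spectrum_subset ℝ ht with rfl | rfl <;> simp [h0, h1]

theorem exists_isStarProjection_lift_of_norm_sub_lt {C D : Type*} [CStarAlgebra C]
    [CStarAlgebra D] (φ : C →⋆ₐ[ℂ] D) (hφ : Function.Surjective φ) {p : D}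
    (hp : IsStarProjection p) {Q : C} (hQ : IsStarProjection Q) (hpQ : ‖p - φ Q‖ < 2⁻¹) :
    ∃ P : C, IsStarProjection P ∧ φ P = p := by
  obtain ⟨A, hA, hφA, hAnorm⟩ :=
    exists_isSelfAdjoint_lift_norm_le φ hφ (hp.isSelfAdjoint.sub (hQ.isSelfAdjoint.map φ))
  have hφa : φ (Q + A) = p := by rw [map_add, hφA, add_sub_cancel]
  have hgap : (2⁻¹ : ℝ) ∉ spectrum ℝ (Q + A) :=
    hQ.half_notMem_spectrum_add (hAnorm.trans_lt hpQ)
  let χ : ℝ → ℝ := fun t => if 2⁻¹ < t then 1 else 0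
  have hχ : ContinuousOn χ (spectrum ℝ (Q + A)) := by
    intro t ht
    refine ContinuousAt.continuousWithinAt ?_
    rcases lt_or_gt_of_ne (ne_of_mem_of_not_mem ht hgap) with h | h
    · exact continuousAt_const.congr
        ((eventually_lt_nhds h).mono fun s hs => (if_neg hs.not_gt).symm)
    · exact continuousAt_const.congr
        ((eventually_gt_nhds h).mono fun s hs => (if_pos hs).symm)
  have hsa : IsSelfAdjoint (Q + A) := hQ.isSelfAdjoint.add hA
  refine ⟨cfc χ (Q + A),
    isStarProjection_cfc (fun t _ => by by_cases h : 2⁻¹ < t <;> simp [χ, h]) hχ hsa, ?_⟩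
  refine (StarAlgHom.map_cfc φ χ (Q + A) hχ (map_continuous φ) hsa
    (hφa ▸ hp.isSelfAdjoint)).trans ?_
  rw [hφa]
  exact hp.cfc_eq_self (by norm_num [χ]) (by norm_num [χ])

theorem stmt6_general {C D : Type*} [CStarAlgebra C] [CStarAlgebra D]
    (φ : C →⋆ₐ[ℂ] D) (hφ : Function.Surjective φ)
    (p q : D)
    (f : ℝ → D) (hf : ContinuousOn f (Set.Icc 0 1))
    (hfproj : ∀ t ∈ Set.Icc (0 : ℝ) 1, IsSelfAdjoint (f t) ∧ IsIdempotentElem (f t))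
    (hf0 : f 0 = q) (hf1 : f 1 = p)
    (hqlift : ∃ Q : C, IsSelfAdjoint Q ∧ IsIdempotentElem Q ∧ φ Q = q) :
    ∃ P : C, IsSelfAdjoint P ∧ IsIdempotentElem P ∧ φ P = p := by
  let S : Set D := {d | ∃ P : C, IsStarProjection P ∧ φ P = d}
  have hstep : ∀ x ∈ Set.Icc (0 : ℝ) 1, ∀ y ∈ Set.Icc (0 : ℝ) 1,
      dist (f x) (f y) < 2⁻¹ → f x ∈ S → f y ∈ S := by
    rintro x - y hy hxy ⟨Q, hQ, hQx⟩
    refine exists_isStarProjection_lift_of_norm_sub_lt φ hφ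
      ⟨(hfproj y hy).2, (hfproj y hy).1⟩ hQ ?_
    rwa [hQx, ← dist_eq_norm, dist_comm]
  have h0 : f 0 ∈ S := by
    obtain ⟨Q, hQsa, hQidem, hQq⟩ := hqlift
    exact ⟨Q, ⟨hQidem, hQsa⟩, hQq.trans hf0.symm⟩
  obtain ⟨P, hP, hPp⟩ := (isPreconnected_Icc.apply_mem_iff_of_dist_lt hf (by norm_num) hstep
    (Set.left_mem_Icc.2 zero_le_one) (Set.right_mem_Icc.2 zero_le_one)).1 h0
  exact ⟨P, hP.isSelfAdjoint, hP.isIdempotentElem, hPp.trans hf1⟩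

/-- Let `C` be a unital C*-algebra and `J` a closed two-sided ideal.
If a projection `p ∈ C/J` is connected to a projection `q ∈ C/J` by a norm-continuous path
of projections and `q` lifts to a projection in `C`, then `p` lifts to a projection in `C`.

The quotient is encoded by a surjective unital `*`-homomorphism `φ : C → D` between unital
C*-algebras (`D ≅ C/ker φ`); a projection is a self-adjoint idempotent. -/
theorem stmt6 {C D : Type*} [CStarAlgebra C] [CStarAlgebra D]
    (φ : C →⋆ₐ[ℂ] D) (hφ : Function.Surjective φ)
    (p q : D)
    (hp : IsSelfAdjoint p ∧ IsIdempotentElem p)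
    (hq : IsSelfAdjoint q ∧ IsIdempotentElem q)
    (f : ℝ → D) (hf : ContinuousOn f (Set.Icc 0 1))
    (hfproj : ∀ t ∈ Set.Icc (0 : ℝ) 1, IsSelfAdjoint (f t) ∧ IsIdempotentElem (f t))
    (hf0 : f 0 = q) (hf1 : f 1 = p)
    (hqlift : ∃ Q : C, IsSelfAdjoint Q ∧ IsIdempotentElem Q ∧ φ Q = q) :
    ∃ P : C, IsSelfAdjoint P ∧ IsIdempotentElem P ∧ φ P = p :=
  stmt6_general φ hφ p q f hf hfproj hf0 hf1 hqlift
end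

section
/- Let B be a separable stable C*-algebra and (A_t)_{t∈I} a norm-continuous path, over a compact interval I containing 0, of self-adjoint Fredholm operators in M(B) such that A_0 is invertible in M(B). Then for every t ∈ I there exists a self-adjoint b ∈ B such that A_t + b is invertible in M(B) (i.e., every A_t has a trivializing operator). -/
open scoped MultiplierAlgebra

/-- `x ∈ 𝓜(ℂ, B)` belongs to (the canonical image of) the ideal `B` of its
multiplier algebra. -/
def inCanonicalIdeal {B : Type*} [NonUnitalCStarAlgebra B] (x : 𝓜(ℂ, B)) : Prop :=
  ∃ b : B, (b : 𝓜(ℂ, B)) = x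

/-- Murray–von Neumann equivalence of projections. -/
def MvNEquiv {C : Type*} [Mul C] [Star C] (p q : C) : Prop :=
  ∃ v : C, star v * v = p ∧ v * star v = q

/-- `B` is a stable C*-algebra, encoded via the standard characterization (for σ-unital,
in particular separable, `B`): the multiplier algebra `𝓜(ℂ, B)` contains a sequence of
isometries with pairwise orthogonal ranges whose range projections sum to `1` strictly. -/
def IsStable (B : Type*) [NonUnitalCStarAlgebra B] : Prop :=
  ∃ s : ℕ → 𝓜(ℂ, B),
    (∀ n, star (s n) * s n = 1) ∧
    (∀ m n, m ≠ n → star (s m) * s n = 0) ∧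
    ∀ b : B, Filter.Tendsto
      (fun N : ℕ => (∑ n ∈ Finset.range N, s n * star (s n)) * (b : 𝓜(ℂ, B)))
      Filter.atTop (nhds (b : 𝓜(ℂ, B)))


/-!
The set of parameters `t` for which `π (A t)` lifts to a self-adjoint invertible element of the
multiplier algebra is open and closed in the interval, and it contains `0`. Local constancy comes
from a spectral gap: if `x` has no spectrum in `(-ε, ε)` and lifts to an invertible `X`, then
pushing the spectrum of `X` out of `(-ε, ε)` by functional calculus does not change `π X` and makes
the inverse of the lift have norm at most `ε⁻¹`. Adding a norm-preserving self-adjoint lift of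
`x' - x` then keeps the lift invertible as long as `‖x' - x‖ < ε`, and spectral gaps shrink by at
most `‖x' - x‖`. Finally a lift `Y` of `π (A t)` differs from `A t` by a self-adjoint element of `B`.
-/

open scoped CStarAlgebra ComplexStarModule

lemma isUnit_add_of_norm_lt {R : Type*} [NormedRing R] [HasSummableGeomSeries R]
    {u : Rˣ} {d : R} {c : ℝ} (hu : ‖(↑u⁻¹ : R)‖ ≤ c⁻¹) (hd : ‖d‖ < c) : IsUnit ((u : R) + d) := by
  have hc : 0 < c := (norm_nonneg d).trans_lt hd
  have hsmall : ‖-(↑u⁻¹ * d)‖ < 1 := by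
    calc ‖-(↑u⁻¹ * d)‖ ≤ ‖(↑u⁻¹ : R)‖ * ‖d‖ := by rw [norm_neg]; exact norm_mul_le _ _
      _ ≤ c⁻¹ * ‖d‖ := by gcongr
      _ < c⁻¹ * c := by gcongr
      _ = 1 := inv_mul_cancel₀ hc.ne'
  have hfactor : (u : R) + d = u * (1 - -(↑u⁻¹ * d)) := by
    rw [sub_neg_eq_add, mul_add, mul_one, Units.mul_inv_cancel_left]
  rw [hfactor]
  exact u.isUnit.mul (isUnit_one_sub_of_norm_lt_one hsmall)

lemma IsUnit.exists_pos_le_abs_of_mem_spectrum {A : Type*} [NormedRing A] [NormedAlgebra ℝ A]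
    [CompleteSpace A] {a : A} (ha : IsUnit a) : ∃ ε > 0, ∀ μ ∈ spectrum ℝ a, ε ≤ |μ| := by
  obtain ⟨ε, hε, hball⟩ := Metric.isOpen_iff.mp (spectrum.isClosed a).isOpen_compl 0
    (spectrum.zero_notMem ℝ ha)
  refine ⟨ε, hε, fun μ hμ => not_lt.mp fun hμε => hball ?_ hμ⟩
  rwa [Metric.mem_ball, Real.dist_0_eq_abs]

section SpectralGap

variable {C : Type*} [CStarAlgebra C]

lemma exists_unit_eq_cfc_norm_inv_le {a : C} {f : ℝ → ℝ} {c : ℝ} (hc : 0 < c)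
    (hfc : ∀ t ∈ spectrum ℝ a, c ≤ |f t|) (hf : ContinuousOn f (spectrum ℝ a) := by cfc_cont_tac)
    (ha : IsSelfAdjoint a := by cfc_tac) :
    ∃ u : Cˣ, (u : C) = cfc f a ∧ ‖(↑u⁻¹ : C)‖ ≤ c⁻¹ := by
  have hf0 : ∀ t ∈ spectrum ℝ a, f t ≠ 0 := fun t ht h0 => by
    have := hfc t ht
    rw [h0, abs_zero] at this
    linarith
  refine ⟨cfcUnits f a hf0, rfl, norm_cfc_le (by positivity) fun t ht => ?_⟩
  rw [Real.norm_eq_abs, abs_inv]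
  exact inv_anti₀ hc (hfc t ht)

lemma IsSelfAdjoint.sub_norm_sub_le_abs_of_mem_spectrum {a a' : C} (ha : IsSelfAdjoint a)
    {ε : ℝ} (hgap : ∀ μ ∈ spectrum ℝ a, ε ≤ |μ|) :
    ∀ μ ∈ spectrum ℝ a', ε - ‖a' - a‖ ≤ |μ| := by
  intro μ hμ
  by_contra! hlt
  have hshift : ∀ t ∈ spectrum ℝ a, ε - |μ| ≤ |t - μ| := fun t ht => by
    linarith [hgap t ht, abs_sub_abs_le_abs_sub t μ]
  obtain ⟨u, hu, hunorm⟩ :=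
    exists_unit_eq_cfc_norm_inv_le (by linarith [norm_nonneg (a' - a)]) hshift
  rw [cfc_sub (fun t => t) (fun _ => μ) a, cfc_id' ℝ a, cfc_const μ a] at hu
  have hunit : IsUnit (algebraMap ℝ C μ - a') := by
    have := isUnit_add_of_norm_lt hunorm (d := a' - a) (by linarith)
    rw [hu, sub_add_sub_cancel'] at this
    simpa using this.neg
  exact spectrum.mem_iff.mp hμ hunit

end SpectralGap

section SelfAdjointUnitLift

variable {M Q : Type*} [CStarAlgebra M] [CStarAlgebra Q]

/-- For the corona map `π`, `HasSelfAdjointUnitLift π (π A)` says exactly that `A` has a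
trivializing operator. -/
def HasSelfAdjointUnitLift (π : M →⋆ₐ[ℂ] Q) (x : Q) : Prop :=
  ∃ X : M, IsSelfAdjoint X ∧ IsUnit X ∧ π X = x

variable {π : M →⋆ₐ[ℂ] Q}

lemma exists_isSelfAdjoint_lift_norm_le_s10 (hπ : Function.Surjective π) {x : Q}
    (hx : IsSelfAdjoint x) : ∃ d : M, IsSelfAdjoint d ∧ π d = x ∧ ‖d‖ ≤ ‖x‖ := by
  obtain ⟨m, rfl⟩ := hπ x
  set clamp : ℝ → ℝ := fun t => max (-‖π m‖) (min ‖π m‖ t)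
  have hre : π (ℜ m : M) = π m := by rw [map_realPart, hx.coe_realPart]
  refine ⟨cfc clamp (ℜ m : M), cfc_predicate _ _, ?_, norm_cfc_le (norm_nonneg _) fun t _ => ?_⟩
  · nontriviality Q
    have hid : (spectrum ℝ (π m)).EqOn clamp id := fun t ht => by
      have := abs_le.mp ((Real.norm_eq_abs t).symm.trans_le (spectrum.norm_le_norm_of_mem ht))
      simp [clamp, this.1, this.2]
    rw [π.map_cfc clamp _, hre, cfc_congr hid, cfc_id ℝ (π m)]
  · rw [Real.norm_eq_abs, abs_le]
    exact ⟨le_max_left _ _, max_le (by linarith [norm_nonneg (π m)]) (min_le_left _ _)⟩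

lemma exists_isSelfAdjoint_unit_lift_norm_inv_le {X : M} (hX : IsSelfAdjoint X) (hXu : IsUnit X)
    {ε : ℝ} (hε : 0 < ε) (hgap : ∀ μ ∈ spectrum ℝ (π X), ε ≤ |μ|) :
    ∃ u : Mˣ, IsSelfAdjoint (u : M) ∧ π u = π X ∧ ‖(↑u⁻¹ : M)‖ ≤ ε⁻¹ := by
  -- `g` maps `ℝ ∖ {0}` into `|t| ≥ ε` and is the identity where `|t| ≥ ε`.
  set g : ℝ → ℝ := fun t => t * max 1 (ε / |t|)
  have hX0 : ∀ t ∈ spectrum ℝ X, t ≠ 0 := fun t ht h0 => spectrum.zero_notMem ℝ hXu (h0 ▸ ht)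
  have hg : ContinuousOn g (spectrum ℝ X) := by
    fun_prop (disch := exact fun t ht => abs_ne_zero.mpr (hX0 t ht))
  have hgabs : ∀ t ∈ spectrum ℝ X, ε ≤ |g t| := fun t ht => by
    have ht0 : 0 < |t| := abs_pos.mpr (hX0 t ht)
    calc ε = |t| * (ε / |t|) := (mul_div_cancel₀ ε ht0.ne').symm
      _ ≤ |t| * max 1 (ε / |t|) := by gcongr; exact le_max_right _ _
      _ = |g t| := by rw [abs_mul, abs_of_pos (lt_max_of_lt_left one_pos)]
  obtain ⟨u, hu, hunorm⟩ := exists_unit_eq_cfc_norm_inv_le hε hgabs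
  refine ⟨u, hu ▸ cfc_predicate g X, ?_, hunorm⟩
  nontriviality Q
  have hid : (spectrum ℝ (π X)).EqOn g id := fun t ht => by
    have ht0 : 0 < |t| := hε.trans_le (hgap t ht)
    simp [g, (div_le_one ht0).mpr (hgap t ht)]
  rw [hu, π.map_cfc g X, cfc_congr hid, cfc_id ℝ (π X)]

lemma HasSelfAdjointUnitLift.of_norm_sub_lt (hπ : Function.Surjective π) {x x' : Q}
    (hx : HasSelfAdjointUnitLift π x) {ε : ℝ} (hgap : ∀ μ ∈ spectrum ℝ x, ε ≤ |μ|)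
    (hx' : IsSelfAdjoint x') (hxx' : ‖x' - x‖ < ε) : HasSelfAdjointUnitLift π x' := by
  obtain ⟨X, hX, hXu, rfl⟩ := hx
  obtain ⟨u, hu, huX, hunorm⟩ := exists_isSelfAdjoint_unit_lift_norm_inv_le hX hXu
    ((norm_nonneg _).trans_lt hxx') hgap
  obtain ⟨d, hd, hdπ, hdnorm⟩ := exists_isSelfAdjoint_lift_norm_le_s10 hπ (hx'.sub (hX.map π))
  exact ⟨u + d, hu.add hd, isUnit_add_of_norm_lt hunorm (hdnorm.trans_lt hxx'),
    by rw [map_add, huX, hdπ, add_sub_cancel]⟩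

lemma eventually_hasSelfAdjointUnitLift_iff (hπ : Function.Surjective π) {x₀ : Q}
    (hx₀ : IsSelfAdjoint x₀) (hx₀u : IsUnit x₀) :
    ∀ᶠ x in nhds x₀, IsSelfAdjoint x →
      (HasSelfAdjointUnitLift π x ↔ HasSelfAdjointUnitLift π x₀) := by
  obtain ⟨ε, hε, hgap⟩ := hx₀u.exists_pos_le_abs_of_mem_spectrum
  filter_upwards [Metric.ball_mem_nhds x₀ (half_pos hε)] with x hx hxsa
  rw [Metric.mem_ball, dist_eq_norm] at hx
  have hgapx := hx₀.sub_norm_sub_le_abs_of_mem_spectrum hgap (a' := x)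
  exact ⟨fun h => h.of_norm_sub_lt hπ hgapx hx₀ (by rw [norm_sub_rev]; linarith),
    fun h => h.of_norm_sub_lt hπ hgap hxsa (by linarith)⟩

lemma IsPreconnected.hasSelfAdjointUnitLift_iff {X : Type*} [TopologicalSpace X]
    (hπ : Function.Surjective π) {S : Set X} (hS : IsPreconnected S) {f : X → Q}
    (hf : ContinuousOn f S) (hsa : ∀ t ∈ S, IsSelfAdjoint (f t)) (hu : ∀ t ∈ S, IsUnit (f t))
    {t t' : X} (ht : t ∈ S) (ht' : t' ∈ S) :
    HasSelfAdjointUnitLift π (f t) ↔ HasSelfAdjointUnitLift π (f t') := by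
  have : PreconnectedSpace S := Subtype.preconnectedSpace hS
  have hconst : IsLocallyConstant fun s : S => HasSelfAdjointUnitLift π (f s) := by
    refine (IsLocallyConstant.iff_eventually_eq _).mpr fun s => ?_
    have hfs := (hf.domRestrict.tendsto s).eventually
      (eventually_hasSelfAdjointUnitLift_iff hπ (hsa s s.2) (hu s s.2))
    filter_upwards [hfs] with s' hs'
    exact propext (hs' (hsa s' s'.2))
  exact Eq.to_iff (hconst.apply_eq_of_preconnectedSpace ⟨t, ht⟩ ⟨t', ht'⟩)

end SelfAdjointUnitLift

lemma exists_isSelfAdjoint_coe_eq {B : Type*} [NonUnitalCStarAlgebra B] {m : 𝓜(ℂ, B)}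
    (hm : IsSelfAdjoint m) (hB : inCanonicalIdeal m) :
    ∃ b : B, IsSelfAdjoint b ∧ (b : 𝓜(ℂ, B)) = m := by
  obtain ⟨b, rfl⟩ := hB
  exact ⟨ℜ b, (ℜ b).2, (map_realPart (DoubleCentralizer.coeHom (𝕜 := ℂ)) b).trans hm.coe_realPart⟩

theorem stmt10_general {B Q : Type*} [NonUnitalCStarAlgebra B]
    [CStarAlgebra Q]
    (π : 𝓜(ℂ, B) →⋆ₐ[ℂ] Q) (hπ : Function.Surjective π)
    (hker : ∀ m : 𝓜(ℂ, B), π m = 0 ↔ inCanonicalIdeal m)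
    (r s : ℝ) (h0 : (0 : ℝ) ∈ Set.Icc r s)
    (A : ℝ → 𝓜(ℂ, B)) (hcont : ContinuousOn A (Set.Icc r s))
    (hsa : ∀ t ∈ Set.Icc r s, IsSelfAdjoint (A t))
    (hFred : ∀ t ∈ Set.Icc r s, IsUnit (π (A t)))
    (hA0 : IsUnit (A 0)) :
    ∀ t ∈ Set.Icc r s, ∃ b : B, IsSelfAdjoint b ∧ IsUnit (A t + (b : 𝓜(ℂ, B))) := by
  intro t ht
  have hπA : ContinuousOn (fun t => π (A t)) (Set.Icc r s) :=
    (map_continuous π).comp_continuousOn hcont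
  obtain ⟨Y, hY, hYu, hYπ⟩ := (isPreconnected_Icc.hasSelfAdjointUnitLift_iff hπ hπA
    (fun t ht => (hsa t ht).map π) hFred h0 ht).mp ⟨A 0, hsa 0 h0, hA0, rfl⟩
  obtain ⟨b, hb, hbY⟩ := exists_isSelfAdjoint_coe_eq (hY.sub (hsa t ht))
    ((hker _).mp (by rw [map_sub, hYπ, sub_self]))
  exact ⟨b, hb, by rwa [hbY, add_sub_cancel]⟩

/-- Let `B` be a separable stable C*-algebra, `π : M(B) → C(B)` the corona
quotient map (encoded as a surjective `*`-homomorphism onto a unital C*-algebra `Q` with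
kernel the canonical ideal `B`).  Let `(A t)` be a norm-continuous path, over a compact
interval `[r, s]` containing `0`, of self-adjoint Fredholm operators in `M(B)` with `A 0`
invertible in `M(B)`.  Then every `A t` has a trivializing operator: a self-adjoint `b ∈ B`
with `A t + b` invertible in `M(B)`. -/
theorem stmt10 {B Q : Type*} [NonUnitalCStarAlgebra B] [TopologicalSpace.SeparableSpace B]
    [CStarAlgebra Q] (hstable : IsStable B)
    (π : 𝓜(ℂ, B) →⋆ₐ[ℂ] Q) (hπ : Function.Surjective π)
    (hker : ∀ m : 𝓜(ℂ, B), π m = 0 ↔ inCanonicalIdeal m)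
    (r s : ℝ) (h0 : (0 : ℝ) ∈ Set.Icc r s)
    (A : ℝ → 𝓜(ℂ, B)) (hcont : ContinuousOn A (Set.Icc r s))
    (hsa : ∀ t ∈ Set.Icc r s, IsSelfAdjoint (A t))
    (hFred : ∀ t ∈ Set.Icc r s, IsUnit (π (A t)))
    (hA0 : IsUnit (A 0)) :
    ∀ t ∈ Set.Icc r s, ∃ b : B, IsSelfAdjoint b ∧ IsUnit (A t + (b : 𝓜(ℂ, B))) :=
  stmt10_general π hπ hker r s h0 A hcont hsa hFred hA0
end

section
/- Let C be a unital C*-algebra, J ⊆ C a closed two-sided ideal, (p_t)_{t∈[r,s]} a norm-continuous path of projections in C, and q ∈ C a projection with p_r − q ∈ J. Then there exists a norm-continuous path (q_t)_{t∈[r,s]} of projections in C with q_r = q and p_t − q_t ∈ J for all t ∈ [r,s]. -/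
/-!
Cover `[r, s]` by intervals `[x, y]` so short that `‖p t - p x‖ ≤ 1/20` on them. Given a projection
`e` with `p x - e ∈ J`, the elements `a t = e + (p t - p x)` are almost projections
(`‖a t * a t - a t‖ < 3/16`), so their spectra avoid `[1/4, 3/4]` and `cfc stepHalf (a t)` is a
continuous path of projections starting at `e`. Since `stepHalf x - x` is divisible by `x ^ 2 - x`
and `a t * a t - a t ∈ J` (as `a t ≡ p t` mod `J`), this path stays congruent to `p` modulo `J`.
Gluing the pieces interval by interval gives the lift.
-/

open Set

noncomputable def stepHalf (x : ℝ) : ℝ := if x ≤ 1 / 2 then 0 else 1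

/-- `(stepHalf x - x) / (x ^ 2 - x)` with its removable singularities at `0` and `1` filled in. -/
noncomputable def stepHalfFactor (x : ℝ) : ℝ := if x ≤ 1 / 2 then (1 - x)⁻¹ else -x⁻¹

def nearZeroOrOne : Set ℝ := Iio (1 / 4) ∪ Ioi (3 / 4)

lemma stepHalf_mul_self (x : ℝ) : stepHalf x * stepHalf x = stepHalf x := by
  unfold stepHalf; split_ifs <;> norm_num

lemma stepHalf_eq (x : ℝ) : stepHalf x = x + (x ^ 2 - x) * stepHalfFactor x := by
  unfold stepHalf stepHalfFactor
  split_ifs with h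
  · have : 1 - x ≠ 0 := by linarith
    field_simp; ring
  · have : x ≠ 0 := by linarith
    field_simp; ring

lemma isOpen_nearZeroOrOne : IsOpen nearZeroOrOne := isOpen_Iio.union isOpen_Ioi

lemma continuousOn_ite_nearZeroOrOne {f g : ℝ → ℝ} (hf : ContinuousOn f (Iio (1 / 4)))
    (hg : ContinuousOn g (Ioi (3 / 4))) :
    ContinuousOn (fun x ↦ if x ≤ 1 / 2 then f x else g x) nearZeroOrOne := by
  refine ContinuousOn.union_of_isOpen (hf.congr fun x hx ↦ ?_) (hg.congr fun x hx ↦ ?_)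
    isOpen_Iio isOpen_Ioi
  · exact if_pos (by linarith [mem_Iio.1 hx])
  · exact if_neg (by linarith [mem_Ioi.1 hx])

lemma continuousOn_stepHalf : ContinuousOn stepHalf nearZeroOrOne :=
  continuousOn_ite_nearZeroOrOne continuousOn_const continuousOn_const

lemma continuousOn_stepHalfFactor : ContinuousOn stepHalfFactor nearZeroOrOne := by
  refine continuousOn_ite_nearZeroOrOne ?_ ?_
  · exact ContinuousOn.inv₀ (by fun_prop) fun x hx h ↦ by linarith [mem_Iio.1 hx]
  · exact (ContinuousOn.inv₀ (by fun_prop) fun x hx h ↦ by linarith [mem_Ioi.1 hx]).neg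

lemma TwoSidedIdeal.mul_self_sub_self_sub_mem {R : Type*} [Ring R] (J : TwoSidedIdeal R) {a b : R}
    (h : a - b ∈ J) : (a * a - a) - (b * b - b) ∈ J := by
  have : (a * a - a) - (b * b - b) = a * (a - b) + (a - b) * b - (a - b) := by noncomm_ring
  rw [this]
  exact J.sub_mem (J.add_mem (J.mul_mem_left _ _ h) (J.mul_mem_right _ _ h)) h

lemma induction_on_Icc_of_step {P : ℝ → Prop} {r s η : ℝ} (hη : 0 < η) (hrs : r ≤ s) (hr : P r)
    (hstep : ∀ x y, r ≤ x → x ≤ y → y ≤ s → y ≤ x + η → P x → P y) : P s := by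
  have hreach : ∀ k : ℕ, ∀ y, r ≤ y → y ≤ s → y ≤ r + k * η → P y := by
    intro k
    induction k with
    | zero =>
      intro y hry _ hy
      rwa [le_antisymm (by simpa using hy) hry]
    | succ k ih =>
      intro y hry hys hy
      push_cast at hy
      have hrk : r ≤ r + k * η := le_add_of_nonneg_right (by positivity)
      refine hstep _ y (le_min hry hrk) (min_le_left _ _) hys ?_
        (ih _ (le_min hry hrk) ((min_le_left _ _).trans hys) (min_le_right _ _))
      rw [← min_add_add_right]
      exact le_min (by linarith) (by linarith)
  obtain ⟨k, hk⟩ := exists_nat_ge ((s - r) / η)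
  exact hreach k s hrs le_rfl (by rw [div_le_iff₀ hη] at hk; linarith)

section CStarAlgebra

variable {A : Type*} [CStarAlgebra A]

lemma spectrum_subset_nearZeroOrOne {a : A} (ha : ‖a * a - a‖ < 3 / 16) :
    spectrum ℝ a ⊆ nearZeroOrOne := by
  nontriviality A
  intro x hx
  have hmem := spectrum.subset_polynomial_aeval a (Polynomial.X ^ 2 - Polynomial.X) ⟨x, hx, rfl⟩
  simp only [Polynomial.eval_sub, Polynomial.eval_pow, Polynomial.eval_X, map_sub, map_pow,
    Polynomial.aeval_X] at hmem
  have hle := (spectrum.norm_le_norm_of_mem hmem).trans_lt (by rwa [sq])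
  rw [Real.norm_eq_abs, abs_lt] at hle
  -- `x ^ 2 - x ≤ -3/16` on `[1/4, 3/4]`
  by_contra hx'
  simp only [nearZeroOrOne, mem_union, mem_Iio, mem_Ioi, not_or, not_lt] at hx'
  nlinarith [hx'.1, hx'.2]

lemma isStarProjection_cfc_of_mul_self {f : ℝ → ℝ} (hf : ∀ x, f x * f x = f x) (a : A) :
    IsStarProjection (cfc f a) := by
  by_cases h : ContinuousOn f (spectrum ℝ a) ∧ IsSelfAdjoint a
  · refine ⟨?_, cfc_predicate f a⟩
    rw [IsIdempotentElem, ← cfc_mul f f a h.1 h.1]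
    exact cfc_congr fun x _ ↦ hf x
  · rw [not_and_or] at h
    rcases h with h | h
    · rw [cfc_apply_of_not_continuousOn a h]; exact .zero A
    · rw [cfc_apply_of_not_predicate a h]; exact .zero A

lemma cfc_stepHalf_eq {a : A} (ha : IsSelfAdjoint a) (hgap : spectrum ℝ a ⊆ nearZeroOrOne) :
    cfc stepHalf a = a + (a * a - a) * cfc stepHalfFactor a := by
  have hH := continuousOn_stepHalfFactor.mono hgap
  calc cfc stepHalf a = cfc (fun x ↦ x + (x ^ 2 - x) * stepHalfFactor x) a :=
        cfc_congr fun x _ ↦ stepHalf_eq x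
    _ = cfc (fun x : ℝ ↦ x) a + cfc (fun x : ℝ ↦ x ^ 2 - x) a * cfc stepHalfFactor a := by
        rw [cfc_add .., cfc_mul ..]
    _ = a + (a * a - a) * cfc stepHalfFactor a := by
        rw [cfc_sub .., cfc_pow_id a 2, cfc_id' ℝ a, sq]

lemma sub_cfc_stepHalf_mem (J : TwoSidedIdeal A) {a e : A} (ha : IsSelfAdjoint a)
    (hgap : spectrum ℝ a ⊆ nearZeroOrOne) (he : IsIdempotentElem e) (hea : e - a ∈ J) :
    e - cfc stepHalf a ∈ J := by
  have hquad : a * a - a ∈ J := by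
    have := J.mul_self_sub_self_sub_mem (a := a) (b := e) (by rw [← neg_sub]; exact neg_mem hea)
    rwa [he.eq, sub_self, sub_zero] at this
  rw [cfc_stepHalf_eq ha hgap, ← sub_sub]
  exact J.sub_mem hea (J.mul_mem_right _ _ hquad)

lemma cfc_stepHalf_of_isStarProjection {e : A} (he : IsStarProjection e) : cfc stepHalf e = e := by
  have hgap : spectrum ℝ e ⊆ nearZeroOrOne :=
    spectrum_subset_nearZeroOrOne (by simp [he.isIdempotentElem.eq])
  simp [cfc_stepHalf_eq he.isSelfAdjoint hgap, he.isIdempotentElem.eq]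

lemma norm_add_mul_self_sub_lt {e b : A} (he : IsStarProjection e) (hb : ‖b‖ ≤ 1 / 20) :
    ‖(e + b) * (e + b) - (e + b)‖ < 3 / 16 := by
  have hexp : (e + b) * (e + b) - (e + b) = e * b + b * e + b * b - b := by
    have := he.isIdempotentElem.eq
    noncomm_ring; rw [this]; abel
  have he1 := he.norm_le
  have hb0 := norm_nonneg b
  calc ‖(e + b) * (e + b) - (e + b)‖
      ≤ ‖e‖ * ‖b‖ + ‖b‖ * ‖e‖ + ‖b‖ * ‖b‖ + ‖b‖ := by
        rw [hexp]
        refine (norm_sub_le _ _).trans ?_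
        gcongr
        exact (norm_add₃_le ..).trans (by gcongr <;> exact norm_mul_le _ _)
    _ < 3 / 16 := by nlinarith

variable (J : TwoSidedIdeal A) (p : ℝ → A)

structure IsProjPathCongrOn (Q : ℝ → A) (s : Set ℝ) : Prop where
  continuousOn : ContinuousOn Q s
  isStarProjection : ∀ t ∈ s, IsStarProjection (Q t)
  sub_mem : ∀ t ∈ s, p t - Q t ∈ J

variable {J p}

lemma isProjPathCongrOn_const_Icc_self {q : A} {r : ℝ} (hq : IsStarProjection q)
    (hpq : p r - q ∈ J) : IsProjPathCongrOn J p (fun _ ↦ q) (Icc r r) :=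
  ⟨continuousOn_const, fun _ _ ↦ hq, fun t ht ↦ by
    rw [Icc_self, mem_singleton_iff] at ht
    rwa [ht]⟩

lemma isProjPathCongrOn_cfc_stepHalf {s : Set ℝ} {x : ℝ} (hx : x ∈ s) (hp : ContinuousOn p s)
    (hproj : ∀ t ∈ s, IsStarProjection (p t)) (hclose : ∀ t ∈ s, ‖p t - p x‖ ≤ 1 / 20)
    {e : A} (he : IsStarProjection e) (hpe : p x - e ∈ J) :
    IsProjPathCongrOn J p (fun t ↦ cfc stepHalf (e + (p t - p x))) s := by
  have hsa : ∀ t ∈ s, IsSelfAdjoint (e + (p t - p x)) := fun t ht ↦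
    he.isSelfAdjoint.add ((hproj t ht).isSelfAdjoint.sub (hproj x hx).isSelfAdjoint)
  have hgap : ∀ t ∈ s, spectrum ℝ (e + (p t - p x)) ⊆ nearZeroOrOne := fun t ht ↦
    spectrum_subset_nearZeroOrOne (norm_add_mul_self_sub_lt he (hclose t ht))
  refine ⟨?_, fun t _ ↦ isStarProjection_cfc_of_mul_self stepHalf_mul_self _, fun t ht ↦ ?_⟩
  · refine (continuousOn_const.add (hp.sub continuousOn_const)).cfc_of_mem_nhdsSet _
      (isOpen_nearZeroOrOne.mem_nhdsSet.2 (iUnion₂_subset hgap)) hsa continuousOn_stepHalf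
  · refine sub_cfc_stepHalf_mem J (hsa t ht) (hgap t ht) (hproj t ht).isIdempotentElem ?_
    rwa [sub_add_eq_sub_sub, sub_sub_sub_cancel_left]

lemma IsProjPathCongrOn.congr {Q Q' : ℝ → A} {s : Set ℝ} (hQ : IsProjPathCongrOn J p Q s)
    (h : EqOn Q' Q s) : IsProjPathCongrOn J p Q' s :=
  ⟨hQ.continuousOn.congr h, fun t ht ↦ by rw [h ht]; exact hQ.isStarProjection t ht,
    fun t ht ↦ by rw [h ht]; exact hQ.sub_mem t ht⟩

lemma IsProjPathCongrOn.union {Q : ℝ → A} {s s' : Set ℝ} (hs : IsClosed s) (hs' : IsClosed s')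
    (hQ : IsProjPathCongrOn J p Q s) (hQ' : IsProjPathCongrOn J p Q s') :
    IsProjPathCongrOn J p Q (s ∪ s') :=
  ⟨hQ.continuousOn.union_of_isClosed hQ'.continuousOn hs hs',
    fun t ht ↦ ht.elim (hQ.isStarProjection t) (hQ'.isStarProjection t),
    fun t ht ↦ ht.elim (hQ.sub_mem t) (hQ'.sub_mem t)⟩

lemma IsProjPathCongrOn.piecewise_Icc {Q Q' : ℝ → A} {r x y : ℝ}
    (hQ : IsProjPathCongrOn J p Q (Icc r x)) (hQ' : IsProjPathCongrOn J p Q' (Icc x y))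
    (hQQ' : Q x = Q' x) (hrx : r ≤ x) (hxy : x ≤ y) :
    IsProjPathCongrOn J p (fun t ↦ if t ≤ x then Q t else Q' t) (Icc r y) := by
  rw [← Icc_union_Icc_eq_Icc hrx hxy]
  refine (hQ.congr fun t ht ↦ if_pos ht.2).union isClosed_Icc isClosed_Icc
    (hQ'.congr fun t ht ↦ ?_)
  by_cases htx : t ≤ x
  · rw [if_pos htx, le_antisymm htx ht.1]
    exact hQQ'
  · exact if_neg htx

lemma IsProjPathCongrOn.exists_extend {Q : ℝ → A} {r x y : ℝ}
    (hQ : IsProjPathCongrOn J p Q (Icc r x)) (hrx : r ≤ x) (hxy : x ≤ y)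
    (hp : ContinuousOn p (Icc x y)) (hproj : ∀ t ∈ Icc x y, IsStarProjection (p t))
    (hclose : ∀ t ∈ Icc x y, ‖p t - p x‖ ≤ 1 / 20) :
    ∃ Q' : ℝ → A, Q' r = Q r ∧ IsProjPathCongrOn J p Q' (Icc r y) := by
  have hx : x ∈ Icc r x := right_mem_Icc.2 hrx
  have hQx := hQ.isStarProjection x hx
  have hstep := isProjPathCongrOn_cfc_stepHalf (left_mem_Icc.2 hxy) hp hproj hclose hQx
    (hQ.sub_mem x hx)
  exact ⟨_, if_pos hrx, hQ.piecewise_Icc hstep (by simp [cfc_stepHalf_of_isStarProjection hQx])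
    hrx hxy⟩

end CStarAlgebra

theorem stmt11_general {C : Type*} [CStarAlgebra C]
    (J : TwoSidedIdeal C)
    (r s : ℝ) (hrs : r ≤ s)
    (p : ℝ → C) (hp : ContinuousOn p (Set.Icc r s))
    (hpproj : ∀ t ∈ Set.Icc r s, IsSelfAdjoint (p t) ∧ IsIdempotentElem (p t))
    (q : C) (hqsa : IsSelfAdjoint q) (hqidem : IsIdempotentElem q)
    (hqr : p r - q ∈ J) :
    ∃ Qp : ℝ → C, ContinuousOn Qp (Set.Icc r s) ∧
      (∀ t ∈ Set.Icc r s, IsSelfAdjoint (Qp t) ∧ IsIdempotentElem (Qp t)) ∧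
      Qp r = q ∧ ∀ t ∈ Set.Icc r s, p t - Qp t ∈ J := by
  obtain ⟨δ, hδ, hpδ⟩ := Metric.uniformContinuousOn_iff_le.1
    (isCompact_Icc.uniformContinuousOn_of_continuous hp) (1 / 20) (by norm_num)
  have hproj : ∀ t ∈ Icc r s, IsStarProjection (p t) := fun t ht ↦
    ⟨(hpproj t ht).2, (hpproj t ht).1⟩
  obtain ⟨Q, hQr, hQ⟩ : ∃ Q : ℝ → C, Q r = q ∧ IsProjPathCongrOn J p Q (Icc r s) := by
    refine induction_on_Icc_of_step
      (P := fun y ↦ ∃ Q : ℝ → C, Q r = q ∧ IsProjPathCongrOn J p Q (Icc r y)) hδ hrs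
      ⟨fun _ ↦ q, rfl, isProjPathCongrOn_const_Icc_self ⟨hqidem, hqsa⟩ hqr⟩ ?_
    rintro x y hrx hxy hys hyx ⟨Q, hQr, hQ⟩
    have hsub : Icc x y ⊆ Icc r s := Icc_subset_Icc hrx hys
    have hclose : ∀ t ∈ Icc x y, ‖p t - p x‖ ≤ 1 / 20 := fun t ht ↦ by
      rw [← dist_eq_norm]
      refine hpδ t (hsub ht) x (hsub (left_mem_Icc.2 hxy)) ?_
      linarith [Real.dist_le_of_mem_Icc ht (left_mem_Icc.2 hxy)]
    obtain ⟨Q', hQ'r, hQ'⟩ := hQ.exists_extend hrx hxy (hp.mono hsub)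
      (fun t ht ↦ hproj t (hsub ht)) hclose
    exact ⟨Q', hQ'r.trans hQr, hQ'⟩
  exact ⟨Q, hQ.continuousOn, fun t ht ↦ ⟨(hQ.isStarProjection t ht).isSelfAdjoint,
    (hQ.isStarProjection t ht).isIdempotentElem⟩, hQr, hQ.sub_mem⟩

/-- Let `C` be a unital C*-algebra, `J` a closed two-sided ideal,
`(p t)` a norm-continuous path of projections in `C` over `[r, s]`, and `q` a projection
with `p r − q ∈ J`.  Then there is a norm-continuous path `(q t)` of projections in `C`
with `q r = q` and `p t − q t ∈ J` for all `t ∈ [r, s]`. -/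
theorem stmt11 {C : Type*} [CStarAlgebra C]
    (J : TwoSidedIdeal C) (hJ : IsClosed (J : Set C))
    (r s : ℝ) (hrs : r ≤ s)
    (p : ℝ → C) (hp : ContinuousOn p (Set.Icc r s))
    (hpproj : ∀ t ∈ Set.Icc r s, IsSelfAdjoint (p t) ∧ IsIdempotentElem (p t))
    (q : C) (hqsa : IsSelfAdjoint q) (hqidem : IsIdempotentElem q)
    (hqr : p r - q ∈ J) :
    ∃ Qp : ℝ → C, ContinuousOn Qp (Set.Icc r s) ∧
      (∀ t ∈ Set.Icc r s, IsSelfAdjoint (Qp t) ∧ IsIdempotentElem (Qp t)) ∧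
      Qp r = q ∧ ∀ t ∈ Set.Icc r s, p t - Qp t ∈ J :=
  stmt11_general J r s hrs p hp hpproj q hqsa hqidem hqr
end

section
/- Let B be a separable stable C*-algebra. The quotient map π restricts to a homotopy equivalence from Fred_{SA}(M(B)) := { A ∈ M(B) : A = A*, π(A) invertible in C(B) } onto GL(C(B))_{SA}, the set of self-adjoint invertible elements of the corona algebra, both spaces carrying the norm topology. -/
/-!
A continuous (nonlinear) right inverse `g` of `π` exists by the Bartle–Graves theorem: partitions
of unity give continuous approximate right inverses, and iterating them on the residual converges.
Its real part `σ = ℜ ∘ g` is a continuous self-adjoint-valued section of `π` over the self-adjoint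
elements. Hence `π ∘ σ` is the identity of `GL(Q)_sa`, while `σ ∘ π` is joined to the identity of
`Fred_sa` by the straight-line homotopy `t ↦ (1 - t) σ(π A) + t A`: it stays self-adjoint, and `π`
is constant along it.
-/

open scoped MultiplierAlgebra

open Filter Metric Set Topology
open scoped CStarAlgebra ComplexStarModule

theorem exists_continuous_tendsto_of_norm_succ_sub_le {α X : Type*} [TopologicalSpace α]
    [NormedAddCommGroup X] [CompleteSpace X] {f : ℕ → α → X} (hf : ∀ n, Continuous (f n))
    {b : ℕ → ℝ} (hb : Summable b) (hfb : ∀ n z, ‖f (n + 1) z - f n z‖ ≤ b n) :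
    ∃ g : α → X, Continuous g ∧ ∀ z, Tendsto (fun n => f n z) atTop (𝓝 (g z)) := by
  refine ⟨fun z => f 0 z + ∑' n, (f (n + 1) z - f n z),
    (hf 0).add (continuous_tsum (fun n => (hf (n + 1)).sub (hf n)) hb hfb), fun z => ?_⟩
  have hsum := ((Summable.of_norm_bounded hb fun n => hfb n z).hasSum.tendsto_sum_nat).const_add
    (f 0 z)
  simpa only [Finset.sum_range_sub (fun n => f n z), add_sub_cancel] using hsum

namespace ContinuousLinearMap

variable {X Z : Type*} [NormedAddCommGroup X] [NormedSpace ℝ X] [NormedAddCommGroup Z]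
  [NormedSpace ℝ Z] (L : X →L[ℝ] Z)

theorem exists_continuous_approx_rightInverse {C : ℝ} (hC0 : 0 ≤ C)
    (hC : ∀ z, ∃ x, L x = z ∧ ‖x‖ ≤ C * ‖z‖) {ε : ℝ} (hε : 0 < ε) :
    ∃ g : Z → X, Continuous g ∧ ∀ z, ‖L (g z) - z‖ ≤ ε ∧ ‖g z‖ ≤ C * (‖z‖ + ε) := by
  choose x hLx hx using hC
  obtain ⟨g, hg⟩ := exists_continuous_forall_mem_convex_of_local_const
    (t := fun z => L ⁻¹' closedBall z ε ∩ closedBall 0 (C * (‖z‖ + ε)))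
    (fun z => ((convex_closedBall z ε).linear_preimage L.toLinearMap).inter (convex_closedBall _ _))
    fun z => ⟨x z, eventually_of_mem (ball_mem_nhds z hε) fun y hy => by
      rw [mem_ball, dist_comm] at hy
      refine ⟨by rw [mem_preimage, hLx, mem_closedBall]; exact hy.le, ?_⟩
      rw [mem_closedBall_zero_iff]
      exact (hx z).trans <| mul_le_mul_of_nonneg_left
        (norm_le_norm_add_const_of_dist_le hy.le) hC0⟩
  exact ⟨g, g.continuous, fun z => by simpa [dist_eq_norm] using hg z⟩

def correctionSeq (G : ℕ → Z → X) : ℕ → Z → X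
  | 0 => G 0
  | n + 1 => fun z => correctionSeq G n z + G (n + 1) (z - L (correctionSeq G n z))

variable {G : ℕ → Z → X}

theorem continuous_correctionSeq (hG : ∀ n, Continuous (G n)) (n : ℕ) :
    Continuous (L.correctionSeq G n) := by
  induction n with
  | zero => exact hG 0
  | succ n ih => exact ih.add ((hG (n + 1)).comp (continuous_id.sub (L.continuous.comp ih)))

theorem norm_apply_correctionSeq_sub_le {ε : ℕ → ℝ} (hG : ∀ n z, ‖L (G n z) - z‖ ≤ ε n)
    (n : ℕ) (z : Z) : ‖L (L.correctionSeq G n z) - z‖ ≤ ε n := by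
  cases n with
  | zero => exact hG 0 z
  | succ n =>
    have hres : L (L.correctionSeq G (n + 1) z) - z
        = L (G (n + 1) (z - L (L.correctionSeq G n z))) - (z - L (L.correctionSeq G n z)) := by
      simp only [correctionSeq, map_add]
      abel
    exact hres ▸ hG (n + 1) _

theorem correctionSeq_succ_sub (n : ℕ) (z : Z) :
    L.correctionSeq G (n + 1) z - L.correctionSeq G n z
      = G (n + 1) (z - L (L.correctionSeq G n z)) :=
  add_sub_cancel_left _ _

theorem exists_continuous_rightInverse_of_surjective [CompleteSpace X] [CompleteSpace Z]
    (hL : Function.Surjective L) : ∃ g : Z → X, Continuous g ∧ ∀ z, L (g z) = z := by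
  obtain ⟨C, hC0, hC⟩ := L.exists_preimage_norm_le hL
  have hpow : ∀ n : ℕ, (0 : ℝ) < 2⁻¹ ^ n := fun n => by positivity
  choose G hGc hG using fun n => L.exists_continuous_approx_rightInverse hC0.le hC (hpow n)
  have hres := L.norm_apply_correctionSeq_sub_le fun n z => (hG n z).1
  have hstep : ∀ n z, ‖L.correctionSeq G (n + 1) z - L.correctionSeq G n z‖ ≤ 2 * C * 2⁻¹ ^ n := by
    intro n z
    rw [correctionSeq_succ_sub]
    calc _ ≤ C * (‖z - L (L.correctionSeq G n z)‖ + 2⁻¹ ^ (n + 1)) := (hG _ _).2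
      _ ≤ C * (2⁻¹ ^ n + 2⁻¹ ^ (n + 1)) := by
        gcongr
        rw [norm_sub_rev]
        exact hres n z
      _ ≤ 2 * C * 2⁻¹ ^ n := by
        rw [pow_succ]
        nlinarith [hpow n]
  obtain ⟨g, hgc, hlim⟩ := exists_continuous_tendsto_of_norm_succ_sub_le
    (L.continuous_correctionSeq hGc)
    ((summable_geometric_of_lt_one (by norm_num) (by norm_num)).mul_left (2 * C)) hstep
  refine ⟨g, hgc, fun z => tendsto_nhds_unique ((L.continuous.tendsto _).comp (hlim z)) ?_⟩
  have hres_lim : Tendsto (fun n => L (L.correctionSeq G n z) - z) atTop (𝓝 0) :=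
    squeeze_zero_norm (hres · z) (tendsto_pow_atTop_nhds_zero_of_lt_one (by norm_num) (by norm_num))
  simpa [Function.comp_def] using hres_lim.add_const z

end ContinuousLinearMap

theorem exists_continuous_selfAdjoint_rightInverse {F A Q : Type*} [NonUnitalCStarAlgebra A]
    [NonUnitalCStarAlgebra Q] [FunLike F A Q] [NonUnitalAlgHomClass F ℂ A Q] [StarHomClass F A Q]
    (π : F) (hπ : Function.Surjective π) :
    ∃ σ : Q → A, Continuous σ ∧ (∀ y, IsSelfAdjoint (σ y)) ∧
      ∀ y, IsSelfAdjoint y → π (σ y) = y := by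
  obtain ⟨g, hgc, hg⟩ := (⟨(π : A →ₗ[ℂ] Q).restrictScalars ℝ, map_continuous π⟩ : A →L[ℝ] Q)
    |>.exists_continuous_rightInverse_of_surjective hπ
  refine ⟨fun y => ℜ (g y), by fun_prop, fun y => (ℜ (g y)).2, fun y hy => ?_⟩
  rw [map_realPart, show π (g y) = y from hg y, hy.coe_realPart]

def ContinuousMap.HomotopyEquiv.ofRightInverseOfSegmentSubset {E Y : Type*} [AddCommGroup E]
    [TopologicalSpace E] [ContinuousAdd E] [Module ℝ E] [ContinuousSMul ℝ E]
    [TopologicalSpace Y] {X : Set E} (f : C(X, Y)) (s : C(Y, X)) (hfs : Function.RightInverse s f)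
    (hseg : ∀ x : X, segment ℝ (s (f x) : E) x ⊆ X) : ContinuousMap.HomotopyEquiv X Y where
  toFun := f
  invFun := s
  left_inv := ⟨
    { toFun p := ⟨AffineMap.lineMap (s (f p.2) : E) p.2 (p.1 : ℝ),
        hseg p.2 (lineMap_mem_segment ℝ _ _ p.1.2)⟩
      continuous_toFun := by
        simp only [AffineMap.lineMap_apply_module]
        fun_prop
      map_zero_left x := by simp
      map_one_left x := by simp }⟩
  right_inv := by
    rw [show f.comp s = ContinuousMap.id Y from ContinuousMap.ext hfs]

theorem stmt14_general {B Q : Type*} [NonUnitalCStarAlgebra B]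
    [CStarAlgebra Q]
    (π : 𝓜(ℂ, B) →⋆ₐ[ℂ] Q) (hπ : Function.Surjective π) :
    ∃ h : ContinuousMap.HomotopyEquiv
        {A : 𝓜(ℂ, B) // IsSelfAdjoint A ∧ IsUnit (π A)}
        {y : Q // IsSelfAdjoint y ∧ IsUnit y},
      ∀ A : {A : 𝓜(ℂ, B) // IsSelfAdjoint A ∧ IsUnit (π A)},
        ((h.toFun A : {y : Q // IsSelfAdjoint y ∧ IsUnit y}) : Q) = π (A : 𝓜(ℂ, B)) := by
  obtain ⟨σ, hσc, hσsa, hπσ⟩ := exists_continuous_selfAdjoint_rightInverse π hπ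
  let f : C({A : 𝓜(ℂ, B) // IsSelfAdjoint A ∧ IsUnit (π A)},
      {y : Q // IsSelfAdjoint y ∧ IsUnit y}) :=
    ⟨fun A => ⟨π A, A.2.1.map π, A.2.2⟩, by fun_prop⟩
  let s : C({y : Q // IsSelfAdjoint y ∧ IsUnit y},
      {A : 𝓜(ℂ, B) // IsSelfAdjoint A ∧ IsUnit (π A)}) :=
    ⟨fun y => ⟨σ y, hσsa y, (hπσ y y.2.1).symm ▸ y.2.2⟩, by fun_prop⟩
  refine ⟨.ofRightInverseOfSegmentSubset (X := {A | IsSelfAdjoint A ∧ IsUnit (π A)}) f s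
    (fun y => Subtype.ext (hπσ y y.2.1)) fun A z hz => ?_, fun A => rfl⟩
  have hπz : π z = π A := by
    obtain ⟨a, b, -, -, hab, rfl⟩ := hz
    change π (a • σ (π A) + b • A) = π A
    rw [← Complex.coe_smul, ← Complex.coe_smul, map_add, map_smul, map_smul,
      hπσ _ (A.2.1.map π), ← add_smul, ← Complex.ofReal_add, hab, Complex.ofReal_one, one_smul]
  exact ⟨(selfAdjoint.submodule ℝ _).convex.segment_subset (hσsa _) A.2.1 hz, hπz ▸ A.2.2⟩

/-- Let `B` be a separable stable C*-algebra, `π : M(B) → C(B)` the corona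
quotient map (encoded as a surjective `*`-homomorphism onto a unital C*-algebra `Q` with
kernel the canonical ideal `B`).  Then `π` restricts to a homotopy equivalence from
`Fred_{SA}(M(B)) = { A : A = A*, π(A) invertible }` onto the space `GL(Q)_{SA}` of
self-adjoint invertibles of the corona, both with the norm topology. -/
theorem stmt14 {B Q : Type*} [NonUnitalCStarAlgebra B] [TopologicalSpace.SeparableSpace B]
    [CStarAlgebra Q] (hstable : IsStable B)
    (π : 𝓜(ℂ, B) →⋆ₐ[ℂ] Q) (hπ : Function.Surjective π)
    (hker : ∀ m : 𝓜(ℂ, B), π m = 0 ↔ inCanonicalIdeal m) :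
    ∃ h : ContinuousMap.HomotopyEquiv
        {A : 𝓜(ℂ, B) // IsSelfAdjoint A ∧ IsUnit (π A)}
        {y : Q // IsSelfAdjoint y ∧ IsUnit y},
      ∀ A : {A : 𝓜(ℂ, B) // IsSelfAdjoint A ∧ IsUnit (π A)},
        ((h.toFun A : {y : Q // IsSelfAdjoint y ∧ IsUnit y}) : Q) = π (A : 𝓜(ℂ, B)) :=
  stmt14_general π hπ
end
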